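/- arXiv:1108.1124 — 2 statements merged into one kernel-verified Lean document; each statement's English description precedes it below -/
import Mathlib

section
/- Let (P, ≺) be a finite partially ordered set, let π be an ordering of P, and let x, y ∈ P with y ≺ x. If x precedes y in π, then x precedes y in every ordering σ reachable from π. -/
/-- An ordering of a finite poset `P`: a list of all elements of `P` without repetition. -/
def IsOrdering {P : Type*} (π : List P) : Prop := π.Nodup ∧ ∀ x : P, x ∈ π

/-- A permissible swap: exchange two adjacent elements `a b` with `a ≺ b`. -/
def PermissibleSwap {P : Type*} [PartialOrder P] (π σ : List P) : Prop :=
  ∃ (l₁ l₂ : List P) (a b : P), a < b ∧ π = l₁ ++ a :: b :: l₂ ∧ σ = l₁ ++ b :: a :: l₂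

/-- `σ` is reachable from `π` by a finite (possibly empty) sequence of permissible swaps. -/
def Reachable {P : Type*} [PartialOrder P] (π σ : List P) : Prop :=
  Relation.ReflTransGen PermissibleSwap π σ

/-- An ordering is terminal if no permissible swap applies to it. -/
def Terminal {P : Type*} [PartialOrder P] (π : List P) : Prop :=
  ∀ σ : List P, ¬ PermissibleSwap π σ

/-- `x` precedes `y` in the list `π` (occurs earlier). -/
def Precedes {P : Type*} [DecidableEq P] (π : List P) (x y : P) : Prop :=
  π.idxOf x < π.idxOf y

/-- `x` and `y` are incomparable: neither `x ≺ y` nor `y ≺ x`. -/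
def Incomp {P : Type*} [PartialOrder P] (x y : P) : Prop := ¬ x < y ∧ ¬ y < x

/-- `c` is an `(x,y)`-fence in `π`: a sequence starting at `x`, ending at `y`, whose
elements appear in this order (not necessarily consecutively) in `π`, with consecutive
elements incomparable. -/
def IsFence {P : Type*} [PartialOrder P] (π : List P) (x y : P) (c : List P) : Prop :=
  c.Chain' Incomp ∧ c.Sublist π ∧ c.head? = some x ∧ c.getLast? = some y

/-- There exists an `(x,y)`-fence in `π`. -/
def HasFence {P : Type*} [PartialOrder P] (π : List P) (x y : P) : Prop :=
  ∃ c : List P, IsFence π x y c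

/-- `(x,y)` is a critical pair in `π`: `x ≺ y`, `x` precedes `y` in `π`,
and there is no `(x,y)`-fence in `π`. -/
def Critical {P : Type*} [PartialOrder P] [DecidableEq P] (π : List P) (x y : P) : Prop :=
  x < y ∧ Precedes π x y ∧ ¬ HasFence π x y

lemma precedes_cons_iff {P : Type*} [DecidableEq P] (c x y : P) (l : List P) :
    Precedes (c :: l) x y ↔ x = c ∧ y ≠ c ∨ x ≠ c ∧ y ≠ c ∧ Precedes l x y := by
  simp only [Precedes, List.idxOf_cons]
  grind

/-- Swapping two adjacent entries changes the relative order of first occurrences only for the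
pair `(a, b)` itself. -/
lemma Precedes.swap_adjacent {P : Type*} [DecidableEq P] {x y a b : P} (l₁ l₂ : List P)
    (hxy : ¬ (x = a ∧ y = b)) (h : Precedes (l₁ ++ a :: b :: l₂) x y) :
    Precedes (l₁ ++ b :: a :: l₂) x y := by
  induction l₁ with
  | nil =>
    simp only [List.nil_append, precedes_cons_iff] at h ⊢
    grind
  | cons c l ih =>
    simp only [List.cons_append, precedes_cons_iff] at h ⊢
    grind

lemma PermissibleSwap.precedes {P : Type*} [PartialOrder P] [DecidableEq P] {π σ : List P}
    {x y : P} (hswap : PermissibleSwap π σ) (hxy : ¬ x < y) (h : Precedes π x y) :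
    Precedes σ x y := by
  obtain ⟨l₁, l₂, a, b, hab, rfl, rfl⟩ := hswap
  exact h.swap_adjacent l₁ l₂ fun ⟨hxa, hyb⟩ => hxy (hxa ▸ hyb ▸ hab)

theorem stmt_6_general {P : Type*} [PartialOrder P] [DecidableEq P] (π : List P)
    (x y : P) (hlt : y < x) (hprec : Precedes π x y) :
    ∀ σ : List P, Reachable π σ → Precedes σ x y := by
  intro σ hσ
  induction hσ with
  | refl => exact hprec
  | tail _ hswap ih => exact hswap.precedes (lt_asymm hlt) ih

/-- If `y ≺ x` and `x` precedes `y` in `π`, then `x` precedes `y` in every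
ordering reachable from `π`. -/
theorem stmt_6 {P : Type*} [PartialOrder P] [DecidableEq P] (π : List P)
    (hπ : IsOrdering π) (x y : P) (hlt : y < x) (hprec : Precedes π x y) :
    ∀ σ : List P, Reachable π σ → Precedes σ x y :=
  stmt_6_general π x y hlt hprec
end

section
/- Let (P, ≺) be a finite partially ordered set and let π be an ordering of P. Then all maximal sequences of permissible swaps starting from π have the same length; that is, the number of swaps carried out until a terminal ordering is reached is uniquely determined by π. -/
namespace List

variable {α : Type*}

theorem Sublist.swap_of_not_infix {u v : α} {l₁ l₂ c : List α}
    (hc : c <+ l₁ ++ u :: v :: l₂) (huv : ¬ [u, v] <:+: c) : c <+ l₁ ++ v :: u :: l₂ := by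
  obtain ⟨d₁, d₂, rfl, h₁, h₂⟩ := sublist_append_iff.mp hc
  refine h₁.append ?_
  rcases sublist_cons_iff.mp h₂ with h | ⟨e, rfl, he⟩
  · exact h.trans ((sublist_cons_self u l₂).cons_cons v)
  · rcases sublist_cons_iff.mp he with h | ⟨f, rfl, -⟩
    · exact (h.cons_cons u).cons v
    · exact absurd ⟨d₁, f, by simp⟩ huv

theorem perm_append_swap {a b : α} {l₁ l₂ : List α} :
    l₁ ++ a :: b :: l₂ ~ l₁ ++ b :: a :: l₂ :=
  (Perm.swap b a l₂).append_left l₁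

theorem pair_infix_pair_iff {u v x y : α} : [u, v] <:+: [x, y] ↔ u = x ∧ v = y := by
  refine ⟨fun h => by simpa using h.eq_of_length rfl, ?_⟩
  rintro ⟨rfl, rfl⟩
  exact infix_refl _

theorem exists_cons_append_infix_of_pair_sublist {x y : α} {τ : List α} (h : [x, y] <+ τ) :
    ∃ w, x :: (w ++ [y]) <:+: τ := by
  obtain ⟨r₁, r₂, rfl, hx, hy⟩ := cons_sublist_iff.mp h
  obtain ⟨p₁, q₁, rfl⟩ := append_of_mem hx
  obtain ⟨p₂, q₂, rfl⟩ := append_of_mem (singleton_sublist.mp hy)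
  exact ⟨q₁ ++ p₂, p₁, q₂, by simp⟩

theorem Nodup.pair_sublist_asymm {x y : α} {τ : List α} (hτ : τ.Nodup)
    (h : [x, y] <+ τ) : ¬ [y, x] <+ τ := by
  induction τ <;> grind

end List

open List

theorem precedes_iff_pair_sublist {α : Type*} [DecidableEq α] {τ : List α} (hτ : τ.Nodup)
    {x y : α} (hx : x ∈ τ) (hy : y ∈ τ) (hxy : x ≠ y) : Precedes τ x y ↔ [x, y] <+ τ := by
  induction τ <;> grind [Precedes]

section Fence

variable {P : Type*} [PartialOrder P] {τ τ' σ l₁ l₂ c : List P} {u v x y z : P}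

theorem PermissibleSwap.perm (h : PermissibleSwap τ σ) : τ ~ σ := by
  obtain ⟨l₁, l₂, a, b, -, rfl, rfl⟩ := h
  exact perm_append_swap

theorem IsFence.swap (huv : ¬ Incomp u v) (h : IsFence (l₁ ++ u :: v :: l₂) x y c) :
    IsFence (l₁ ++ v :: u :: l₂) x y c := by
  obtain ⟨hc, hsub, hx, hy⟩ := h
  refine ⟨hc, hsub.swap_of_not_infix fun hinf => huv ?_, hx, hy⟩
  simpa using hc.infix hinf

theorem hasFence_swap_iff (huv : u < v) :
    HasFence (l₁ ++ u :: v :: l₂) x y ↔ HasFence (l₁ ++ v :: u :: l₂) x y :=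
  ⟨fun ⟨c, hc⟩ => ⟨c, hc.swap fun h => h.1 huv⟩,
    fun ⟨c, hc⟩ => ⟨c, hc.swap fun h => h.2 huv⟩⟩

theorem IsFence.pair_sublist (h : IsFence τ x y c) (hxy : x ≠ y) : [x, y] <+ τ := by
  obtain ⟨-, hsub, hx, hy⟩ := h
  cases c with
  | nil => simp at hx
  | cons z c =>
    obtain rfl : z = x := by simpa using hx
    have : y ∈ c := by grind [mem_of_getLast?]
    exact ((singleton_sublist.mpr this).cons_cons z).trans hsub

theorem HasFence.mono (h : HasFence τ x y) (hτ : τ <+ τ') : HasFence τ' x y :=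
  let ⟨c, hc, hsub, hx, hy⟩ := h
  ⟨c, hc, hsub.trans hτ, hx, hy⟩

theorem IsFence.cons (h : IsFence τ z y c) (hxz : Incomp x z) :
    IsFence (x :: τ) x y (x :: c) := by
  obtain ⟨hc, hsub, hz, hy⟩ := h
  cases c with
  | nil => simp at hz
  | cons w c =>
    obtain rfl : w = z := by simpa using hz
    exact ⟨isChain_cons_cons.mpr ⟨hxz, hc⟩, hsub.cons_cons x, rfl, by simpa using hy⟩

theorem hasFence_of_isChain_not_lt {w : List P} (hxy : x < y)
    (hw : (x :: (w ++ [y])).IsChain (¬ · < ·)) : HasFence (x :: (w ++ [y])) x y := by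
  induction w generalizing x with
  | nil => exact absurd hxy (by simpa using hw)
  | cons z w ih =>
    rw [cons_append, isChain_cons_cons] at hw
    obtain ⟨hxz, hw⟩ := hw
    by_cases hzx : z < x
    · refine (ih hxy ?_).mono ((sublist_cons_self z _).cons_cons x)
      rw [isChain_cons] at hw ⊢
      exact ⟨fun h hh hxh => hw.1 h hh (hzx.trans hxh), hw.2⟩
    by_cases hzy : z < y
    · obtain ⟨c, hc⟩ := ih hzy hw
      exact ⟨x :: c, hc.cons ⟨hxz, hzx⟩⟩
    · have hyz : ¬ y < z := fun h => hxz (hxy.trans h)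
      refine ⟨[x, z, y], ?_, ?_, rfl, rfl⟩
      · exact isChain_cons_cons.mpr ⟨⟨hxz, hzx⟩, isChain_pair.mpr ⟨hzy, hyz⟩⟩
      · exact ((singleton_sublist.mpr (by simp)).cons_cons z).cons_cons x

theorem terminal_iff_isChain : Terminal τ ↔ τ.IsChain (¬ · < ·) := by
  rw [isChain_iff_forall_rel_of_append_cons_cons]
  constructor
  · rintro h a b l₁ l₂ rfl hab
    exact h _ ⟨l₁, l₂, a, b, hab, rfl, rfl⟩
  · rintro h σ ⟨l₁, l₂, a, b, hab, rfl, -⟩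
    exact h rfl hab

theorem Terminal.hasFence (ht : Terminal τ) (hxy : x < y) (h : [x, y] <+ τ) :
    HasFence τ x y := by
  obtain ⟨w, hw⟩ := exists_cons_append_infix_of_pair_sublist h
  exact (hasFence_of_isChain_not_lt hxy ((terminal_iff_isChain.mp ht).infix hw)).mono hw.sublist

end Fence

section CriticalPairs

variable {P : Type*} [PartialOrder P] [DecidableEq P] {τ σ l₁ l₂ : List P} {a b x y : P}

theorem critical_iff_pair_sublist (hτ : τ.Nodup) (hx : x ∈ τ) (hy : y ∈ τ) :
    Critical τ x y ↔ x < y ∧ [x, y] <+ τ ∧ ¬ HasFence τ x y :=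
  and_congr_right fun hxy => and_congr_left' (precedes_iff_pair_sublist hτ hx hy hxy.ne)

theorem critical_of_permissibleSwap (hab : a < b) (hτ : (l₁ ++ a :: b :: l₂).Nodup) :
    Critical (l₁ ++ a :: b :: l₂) a b := by
  have hσ : (l₁ ++ b :: a :: l₂).Nodup := perm_append_swap.nodup_iff.mp hτ
  refine (critical_iff_pair_sublist hτ (by simp) (by simp)).mpr ⟨hab, by simp, ?_⟩
  rw [hasFence_swap_iff hab]
  rintro ⟨c, hc⟩
  exact hσ.pair_sublist_asymm (by simp) (hc.pair_sublist hab.ne)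

theorem not_critical_of_permissibleSwap (hσ : (l₁ ++ b :: a :: l₂).Nodup) :
    ¬ Critical (l₁ ++ b :: a :: l₂) a b := fun h =>
  hσ.pair_sublist_asymm (by simp) ((critical_iff_pair_sublist hσ (by simp) (by simp)).mp h).2.1

theorem critical_swap_iff (hab : a < b) (hne : (x, y) ≠ (a, b))
    (hτ : (l₁ ++ a :: b :: l₂).Nodup) (hx : x ∈ l₁ ++ a :: b :: l₂)
    (hy : y ∈ l₁ ++ a :: b :: l₂) :
    Critical (l₁ ++ a :: b :: l₂) x y ↔ Critical (l₁ ++ b :: a :: l₂) x y := by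
  rw [critical_iff_pair_sublist hτ hx hy, critical_iff_pair_sublist (perm_append_swap.nodup_iff.mp hτ)
    (perm_append_swap.mem_iff.mp hx) (perm_append_swap.mem_iff.mp hy), hasFence_swap_iff hab]
  refine and_congr_right fun hxy => and_congr_left' ⟨fun h => h.swap_of_not_infix ?_,
    fun h => h.swap_of_not_infix ?_⟩
  · rw [pair_infix_pair_iff]
    rintro ⟨rfl, rfl⟩
    exact hne rfl
  · rw [pair_infix_pair_iff]
    rintro ⟨rfl, rfl⟩
    exact lt_asymm hab hxy

-- Restricted to elements of `τ`, since `Critical τ x y` holds vacuously when `x ∈ τ`, `y ∉ τ`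
-- and `x < y`.
open Classical in
noncomputable def criticalPairs (τ : List P) : Finset (P × P) :=
  (τ.toFinset ×ˢ τ.toFinset).filter fun p => Critical τ p.1 p.2

@[simp]
theorem mem_criticalPairs {p : P × P} :
    p ∈ criticalPairs τ ↔ p.1 ∈ τ ∧ p.2 ∈ τ ∧ Critical τ p.1 p.2 := by
  simp [criticalPairs, and_assoc]

theorem criticalPairs_swap (hab : a < b) (hτ : (l₁ ++ a :: b :: l₂).Nodup) :
    criticalPairs (l₁ ++ a :: b :: l₂) =
      insert (a, b) (criticalPairs (l₁ ++ b :: a :: l₂)) := by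
  ext ⟨x, y⟩
  by_cases hne : (x, y) = (a, b)
  · obtain ⟨rfl, rfl⟩ := Prod.mk.inj hne
    simpa using critical_of_permissibleSwap hab hτ
  · simp only [mem_criticalPairs, Finset.mem_insert, hne, false_or, ← perm_append_swap.mem_iff]
    exact and_congr_right fun hx => and_congr_right fun hy => critical_swap_iff hab hne hτ hx hy

theorem PermissibleSwap.card_criticalPairs (h : PermissibleSwap τ σ) (hτ : τ.Nodup) :
    (criticalPairs τ).card = (criticalPairs σ).card + 1 := by
  obtain ⟨l₁, l₂, a, b, hab, rfl, rfl⟩ := h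
  rw [criticalPairs_swap hab hτ, Finset.card_insert_of_notMem]
  exact fun h => not_critical_of_permissibleSwap
    (perm_append_swap.nodup_iff.mp hτ) (mem_criticalPairs.mp h).2.2

theorem Terminal.criticalPairs_eq_empty (ht : Terminal τ) (hτ : τ.Nodup) :
    criticalPairs τ = ∅ := by
  refine Finset.eq_empty_of_forall_notMem fun ⟨x, y⟩ h => ?_
  obtain ⟨hx, hy, hc⟩ := mem_criticalPairs.mp h
  obtain ⟨hxy, hsub, hf⟩ := (critical_iff_pair_sublist hτ hx hy).mp hc
  exact hf (ht.hasFence hxy hsub)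

theorem length_eq_card_criticalPairs {π : List P} (hπ : π.Nodup) {s : ℕ → List P} {m : ℕ}
    (hs0 : s 0 = π) (hswap : ∀ i < m, PermissibleSwap (s i) (s (i + 1)))
    (hterm : Terminal (s m)) : m = (criticalPairs π).card := by
  have key : ∀ i ≤ m,
      (s i).Nodup ∧ (criticalPairs π).card = (criticalPairs (s i)).card + i := by
    intro i
    induction i with
    | zero => simp [hs0, hπ]
    | succ i ih =>
      intro hi
      obtain ⟨hn, hcard⟩ := ih (by omega)
      have hsw := hswap i hi
      exact ⟨hsw.perm.nodup_iff.mp hn, by rw [hcard, hsw.card_criticalPairs hn]; omega⟩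
  obtain ⟨hn, hcard⟩ := key m le_rfl
  simpa [hterm.criticalPairs_eq_empty hn] using hcard.symm

end CriticalPairs

/-- All maximal sequences of permissible swaps starting from `π` (i.e.
those ending at a terminal ordering) have the same length. -/
theorem stmt_10 {P : Type*} [PartialOrder P] (π : List P) (hπ : IsOrdering π)
    (s s' : ℕ → List P) (m m' : ℕ)
    (hs0 : s 0 = π) (hswap : ∀ i < m, PermissibleSwap (s i) (s (i + 1)))
    (hterm : Terminal (s m))
    (hs0' : s' 0 = π) (hswap' : ∀ i < m', PermissibleSwap (s' i) (s' (i + 1)))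
    (hterm' : Terminal (s' m')) :
    m = m' := by
  classical
  rw [length_eq_card_criticalPairs hπ.1 hs0 hswap hterm,
    length_eq_card_criticalPairs hπ.1 hs0' hswap' hterm']
end
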